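/- arXiv:2110.00611 — 4 statements merged into one kernel-verified Lean document; each statement's English description precedes it below -/
import Mathlib

section
/- Let f: X → (-∞, +∞] and x ∈ dom f. If for every ε > 0 the Φ-ε-subdifferential ∂^ε_Φ f(x) is nonempty, then f(x) = f**_Φ(x). -/
/-- Φ-conjugate of `f`. -/
noncomputable def phiConj {X : Type*} (f : X → EReal) (φ : X → ℝ) : EReal :=
  ⨆ y : X, ((φ y : EReal) - f y)

/-- Φ-biconjugate of `f`. -/
noncomputable def phiBiconj {X : Type*} (Φ : Set (X → ℝ)) (f : X → EReal) (x : X) : EReal :=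
  ⨆ φ ∈ Φ, ((φ x : EReal) - phiConj f φ)

/-- `φ ∈ Φ` is a Φ-ε-subgradient of `f` at `x`. -/
def IsEpsSubgradient {X : Type*} (Φ : Set (X → ℝ)) (f : X → EReal) (x : X)
    (ε : ℝ) (φ : X → ℝ) : Prop :=
  φ ∈ Φ ∧ ∀ y : X, f y - f x ≥ (φ y : EReal) - (φ x : EReal) - (ε : EReal)

/-!
Fenchel–Young gives `f**_Φ ≤ f` everywhere. Conversely, an ε-subgradient `φ` at `x` bounds the
conjugate by `f*_Φ(φ) ≤ φ(x) - (f(x) - ε)`, hence `f**_Φ(x) ≥ f(x) - ε`; let `ε → 0`.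
-/

theorem EReal.coe_sub_sub_cancel (a : ℝ) (c : EReal) : (a : EReal) - (a - c) = c := by
  induction c with
  | bot => simp
  | top => simp
  | coe c => norm_cast; exact sub_sub_cancel a c

theorem EReal.le_of_forall_pos_sub_le {a b : EReal} (h : ∀ ε : ℝ, 0 < ε → a - ε ≤ b) :
    a ≤ b := by
  refine EReal.ge_of_forall_gt_iff_ge.1 fun z hz => ?_
  induction a with
  | bot => exact absurd hz not_lt_bot
  | top =>
    have h₁ := h 1 one_pos
    rw [EReal.top_sub_coe, top_le_iff] at h₁
    simp [h₁]
  | coe r =>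
    simpa [EReal.coe_sub_sub_cancel] using h (r - z) (_root_.sub_pos.2 (EReal.coe_lt_coe_iff.1 hz))

theorem phiBiconj_le_self {X : Type*} (Φ : Set (X → ℝ)) (f : X → EReal) (x : X) :
    phiBiconj Φ f x ≤ f x := by
  refine iSup₂_le fun φ _ => ?_
  have hconj : (φ x : EReal) - f x ≤ phiConj f φ := le_iSup (fun y => (φ y : EReal) - f y) x
  simpa only [EReal.coe_sub_sub_cancel] using EReal.sub_le_sub (le_refl (φ x : EReal)) hconj

namespace IsEpsSubgradient

variable {X : Type*} {Φ : Set (X → ℝ)} {f : X → EReal} {x : X} {ε : ℝ} {φ : X → ℝ}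

theorem apply_ne_top (hφ : IsEpsSubgradient Φ f x ε φ) : f x ≠ ⊤ := by
  intro htop
  simpa [htop] using hφ.2 x

theorem apply_ne_bot (hφ : IsEpsSubgradient Φ f x ε φ) (y : X) : f y ≠ ⊥ := by
  intro hbot
  simpa [hbot, ← EReal.coe_sub] using hφ.2 y

theorem phiConj_le (hφ : IsEpsSubgradient Φ f x ε φ) :
    phiConj f φ ≤ (φ x : EReal) - (f x - ε) := by
  lift f x to ℝ using ⟨hφ.apply_ne_top, hφ.apply_ne_bot x⟩ with r hr
  refine iSup_le fun y => ?_
  have hy := hφ.2 y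
  rw [← hr] at hy
  induction hfy : f y with
  | bot => exact absurd hfy (hφ.apply_ne_bot y)
  | top => simp
  | coe s =>
    rw [hfy] at hy
    norm_cast at hy ⊢
    linarith

theorem sub_le_phiBiconj (hφ : IsEpsSubgradient Φ f x ε φ) :
    f x - ε ≤ phiBiconj Φ f x := by
  refine le_iSup₂_of_le φ hφ.1 ?_
  simpa only [EReal.coe_sub_sub_cancel] using
    EReal.sub_le_sub (le_refl (φ x : EReal)) hφ.phiConj_le

end IsEpsSubgradient

theorem eq_biconjugate_of_eps_subdifferential_nonempty_general {X : Type*}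
    (Φ : Set (X → ℝ)) (f : X → EReal) (x : X)
    (h : ∀ ε : ℝ, 0 < ε → ∃ φ : X → ℝ, IsEpsSubgradient Φ f x ε φ) :
    f x = phiBiconj Φ f x := by
  refine le_antisymm (EReal.le_of_forall_pos_sub_le fun ε hε => ?_) (phiBiconj_le_self Φ f x)
  obtain ⟨φ, hφ⟩ := h ε hε
  exact hφ.sub_le_phiBiconj

/-- If for every `ε > 0` the Φ-ε-subdifferential of `f` at `x ∈ dom f` is
nonempty, then `f(x) = f**_Φ(x)`. -/
theorem eq_biconjugate_of_eps_subdifferential_nonempty {X : Type*}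
    (Φ : Set (X → ℝ)) (f : X → EReal) (hf : ∀ y, f y ≠ ⊥)
    (x : X) (hx : f x ≠ ⊤)
    (h : ∀ ε : ℝ, 0 < ε → ∃ φ : X → ℝ, IsEpsSubgradient Φ f x ε φ) :
    f x = phiBiconj Φ f x :=
  eq_biconjugate_of_eps_subdifferential_nonempty_general Φ f x h
end

section
/- Let X be a set, α ∈ ℝ, and φ₁, φ₂: X → ℝ. Then φ₁ and φ₂ have the intersection property at level α (for all t ∈ [0,1], either [tφ₁ + (1−t)φ₂ < α] ∩ [φ₁ < α] = ∅ or [tφ₁ + (1−t)φ₂ < α] ∩ [φ₂ < α] = ∅) if and only if there exists t₀ ∈ [0,1] such that t₀φ₁(x) + (1−t₀)φ₂(x) ≥ α for all x ∈ X. -/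
/-- `φ₁` and `φ₂` have the intersection property on `X` at level `α`. -/
def IntersectionProperty {X : Type*} (φ₁ φ₂ : X → ℝ) (α : ℝ) : Prop :=
  ∀ t : ℝ, t ∈ Set.Icc (0 : ℝ) 1 →
    ({x : X | t * φ₁ x + (1 - t) * φ₂ x < α} ∩ {x : X | φ₁ x < α} = ∅ ∨
     {x : X | t * φ₁ x + (1 - t) * φ₂ x < α} ∩ {x : X | φ₂ x < α} = ∅)

/-!
Let `D_ψ = disjointParams φ₁ φ₂ α ψ` be the set of `t` at which `[tφ₁ + (1-t)φ₂ < α]` misses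
`[ψ < α]`. Each `D_ψ` is closed, and the intersection property says `[0,1] ⊆ D_φ₁ ∪ D_φ₂`.
It forces `0 ∈ D_φ₁` (as `0 ∈ D_φ₂` means `φ₂ ≥ α`) and likewise `1 ∈ D_φ₂`, so connectedness
of `[0,1]` gives a common point, at which the combination is `≥ α` everywhere. Conversely, as `t ↦ tφ₁(x) + (1-t)φ₂(x)` is affine, such a `t₀`
puts `[0,t₀]` into `D_φ₁` and `[t₀,1]` into `D_φ₂`.
-/

open Set

lemma affine_lt_of_lt_of_lt {a b α s t u : ℝ} (hs : s * a + (1 - s) * b < α)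
    (hu : u * a + (1 - u) * b < α) (hst : s ≤ t) (htu : t ≤ u) :
    t * a + (1 - t) * b < α := by
  rcases le_total a b with hab | hab
  · nlinarith [mul_nonneg (sub_nonneg.2 hst) (sub_nonneg.2 hab)]
  · nlinarith [mul_nonneg (sub_nonneg.2 htu) (sub_nonneg.2 hab)]

section DisjointParams

variable {X : Type*} (φ₁ φ₂ : X → ℝ) (α : ℝ)

def disjointParams (ψ : X → ℝ) : Set ℝ :=
  ⋂ x ∈ {x | ψ x < α}, {t | α ≤ t * φ₁ x + (1 - t) * φ₂ x}

variable {φ₁ φ₂ α}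

lemma mem_disjointParams_iff {ψ : X → ℝ} {t : ℝ} :
    t ∈ disjointParams φ₁ φ₂ α ψ ↔
      {x | t * φ₁ x + (1 - t) * φ₂ x < α} ∩ {x | ψ x < α} = ∅ := by
  simp only [disjointParams, mem_iInter₂, mem_ofPred_eq, eq_empty_iff_forall_notMem, mem_inter_iff,
    not_and]
  exact forall_congr' fun x => by rw [← not_lt]; exact Imp.swap

lemma isClosed_disjointParams (ψ : X → ℝ) : IsClosed (disjointParams φ₁ φ₂ α ψ) :=
  isClosed_biInter fun _ _ => isClosed_le continuous_const (by fun_prop)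

lemma intersectionProperty_iff_Icc_subset :
    IntersectionProperty φ₁ φ₂ α ↔
      Icc 0 1 ⊆ disjointParams φ₁ φ₂ α φ₁ ∪ disjointParams φ₁ φ₂ α φ₂ := by
  simp only [IntersectionProperty, subset_def, mem_union, mem_disjointParams_iff]

lemma zero_mem_disjointParams_left
    (h : 0 ∈ disjointParams φ₁ φ₂ α φ₁ ∪ disjointParams φ₁ φ₂ α φ₂) :
    0 ∈ disjointParams φ₁ φ₂ α φ₁ := by
  simp only [disjointParams, mem_union, mem_iInter₂, mem_ofPred_eq] at h ⊢
  rcases h with h | h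
  · exact h
  · intro x _
    by_contra hx
    simp only [zero_mul, sub_zero, one_mul, zero_add] at h hx
    exact hx (h x (not_le.1 hx))

lemma one_mem_disjointParams_right
    (h : 1 ∈ disjointParams φ₁ φ₂ α φ₁ ∪ disjointParams φ₁ φ₂ α φ₂) :
    1 ∈ disjointParams φ₁ φ₂ α φ₂ := by
  simp only [disjointParams, mem_union, mem_iInter₂, mem_ofPred_eq] at h ⊢
  rcases h with h | h
  · intro x _
    by_contra hx
    simp only [one_mul, sub_self, zero_mul, add_zero] at h hx
    exact hx (h x (not_le.1 hx))
  · exact h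

lemma le_of_mem_disjointParams_inter {t : ℝ} (ht : t ∈ Icc (0 : ℝ) 1)
    (h₁ : t ∈ disjointParams φ₁ φ₂ α φ₁) (h₂ : t ∈ disjointParams φ₁ φ₂ α φ₂) (x : X) :
    α ≤ t * φ₁ x + (1 - t) * φ₂ x := by
  simp only [disjointParams, mem_iInter₂, mem_ofPred_eq] at h₁ h₂
  by_cases hx₁ : φ₁ x < α
  · exact h₁ x hx₁
  by_cases hx₂ : φ₂ x < α
  · exact h₂ x hx₂
  nlinarith [ht.1, ht.2]

lemma mem_disjointParams_left_of_le {t₀ t : ℝ}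
    (h₀ : ∀ x, α ≤ t₀ * φ₁ x + (1 - t₀) * φ₂ x) (ht₀ : t₀ ≤ 1) (ht : t ≤ t₀) :
    t ∈ disjointParams φ₁ φ₂ α φ₁ := by
  simp only [disjointParams, mem_iInter₂, mem_ofPred_eq]
  intro x hx
  by_contra hlt
  have hx' : 1 * φ₁ x + (1 - 1) * φ₂ x < α := by simpa using hx
  exact (h₀ x).not_gt (affine_lt_of_lt_of_lt (not_le.1 hlt) hx' ht ht₀)

lemma mem_disjointParams_right_of_ge {t₀ t : ℝ}
    (h₀ : ∀ x, α ≤ t₀ * φ₁ x + (1 - t₀) * φ₂ x) (ht₀ : 0 ≤ t₀) (ht : t₀ ≤ t) :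
    t ∈ disjointParams φ₁ φ₂ α φ₂ := by
  simp only [disjointParams, mem_iInter₂, mem_ofPred_eq]
  intro x hx
  by_contra hlt
  have hx' : 0 * φ₁ x + (1 - 0) * φ₂ x < α := by simpa using hx
  exact (h₀ x).not_gt (affine_lt_of_lt_of_lt hx' (not_le.1 hlt) ht₀ ht)

end DisjointParams

/-- `φ₁, φ₂` have the intersection property at level `α` iff some convex
combination of them is ≥ `α` everywhere. -/
theorem intersection_property_iff_convex_combination {X : Type*}
    (α : ℝ) (φ₁ φ₂ : X → ℝ) :
    IntersectionProperty φ₁ φ₂ α ↔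
      ∃ t₀ ∈ Set.Icc (0 : ℝ) 1, ∀ x : X, t₀ * φ₁ x + (1 - t₀) * φ₂ x ≥ α := by
  rw [intersectionProperty_iff_Icc_subset]
  constructor
  · intro h
    have h₀ := zero_mem_disjointParams_left (h ⟨le_rfl, zero_le_one⟩)
    have h₁ := one_mem_disjointParams_right (h ⟨zero_le_one, le_rfl⟩)
    obtain ⟨t₀, ht₀, ht₀₁, ht₀₂⟩ :=
      isPreconnected_closed_iff.1 isPreconnected_Icc _ _ (isClosed_disjointParams _)
        (isClosed_disjointParams _) h ⟨0, ⟨le_rfl, zero_le_one⟩, h₀⟩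
        ⟨1, ⟨zero_le_one, le_rfl⟩, h₁⟩
    exact ⟨t₀, ht₀, le_of_mem_disjointParams_inter ht₀ ht₀₁ ht₀₂⟩
  · rintro ⟨t₀, ⟨ht₀0, ht₀1⟩, h₀⟩ t -
    rcases le_total t t₀ with ht | ht
    · exact Or.inl (mem_disjointParams_left_of_le h₀ ht₀1 ht)
    · exact Or.inr (mem_disjointParams_right_of_ge h₀ ht₀0 ht)
end

section
/- Let Φ be symmetric (Φ = −Φ) and f, g: X → (-∞,+∞] be Φ-convex. For x* ∈ X and φ* ∈ Φ, if −φ* ∈ ∂_Φ f(x*) and x* ∈ ∂_X g*_Φ(φ*), then f(x*) + g(x*) = −f*_Φ(−φ*) − g*_Φ(φ*) and this common value equals sup_{φ∈Φ}(−f*_Φ(−φ) − g*_Φ(φ)); i.e., x* solves the primal problem and φ* solves the symmetric conjugate dual. -/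
/-!
Both KKT conditions say that a supremum is attained: `−φ* ∈ ∂_Φ f(x*)` means that `x*`
attains `f*(−φ*) = sup_x (−φ*(x) − f(x))`, and `x* ∈ ∂_X g*(φ*)` means that `φ*` attains
`g**(x*) = sup_φ (φ(x*) − g*(φ))`, which is `g(x*)` by Φ-convexity of `g`. Hence
`f(x*) + g(x*) = −f*(−φ*) − g*(φ*)`, and weak duality `−f*(−φ) − g*(φ) ≤ f(x) + g(x)`,
a consequence of the Fenchel–Young inequality, shows that this common value is both the
infimum of the primal and the supremum of the dual problem.
-/

namespace EReal

theorem exists_eq_coe_of_nonneg_sub_self {u : EReal} (h : 0 ≤ u - u) : ∃ r : ℝ, u = r := by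
  induction u using EReal.rec with
  | bot => simp at h
  | top => simp at h
  | coe r => exact ⟨r, rfl⟩

theorem coe_sub_le_coe_of_coe_sub_le_sub {p q r : ℝ} {u : EReal}
    (h : (p : EReal) - q ≤ u - r) : (p : EReal) - u ≤ ((q - r : ℝ) : EReal) := by
  induction u using EReal.rec with
  | bot => simp [← EReal.coe_sub] at h
  | top => simp
  | coe u =>
    norm_cast at h ⊢
    linarith

end EReal

theorem biSup_coe_sub_eq_of_forall_coe_sub_le_sub {α : Type*} {S : Set α} {F : α → EReal}
    {ψ : α → ℝ} {a₀ : α} {r : ℝ} (ha₀ : a₀ ∈ S) (hr : F a₀ = r)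
    (h : ∀ a ∈ S, F a - F a₀ ≥ (ψ a : EReal) - (ψ a₀ : EReal)) :
    ⨆ a ∈ S, ((ψ a : EReal) - F a) = ((ψ a₀ - r : ℝ) : EReal) := by
  refine le_antisymm (iSup₂_le fun a ha => ?_) ?_
  · exact EReal.coe_sub_le_coe_of_coe_sub_le_sub (hr ▸ h a ha)
  · simpa [hr] using le_biSup (fun a => (ψ a : EReal) - F a) ha₀

section PhiConj

variable {X : Type*}

theorem coe_sub_le_phiConj (f : X → EReal) (φ : X → ℝ) (x : X) :
    (φ x : EReal) - f x ≤ phiConj f φ :=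
  le_iSup (fun y => (φ y : EReal) - f y) x

theorem neg_phiConj_le (f : X → EReal) (φ : X → ℝ) (x : X) :
    -phiConj f φ ≤ f x - φ x := by
  have := EReal.neg_le_neg_iff.2 (coe_sub_le_phiConj f φ x)
  rwa [EReal.neg_sub (Or.inl (EReal.coe_ne_bot _)) (Or.inl (EReal.coe_ne_top _)), add_comm,
    ← sub_eq_add_neg] at this

theorem neg_phiConj_neg_sub_phiConj_le (f g : X → EReal) (φ : X → ℝ) (x : X) :
    -phiConj f (-φ) - phiConj g φ ≤ f x + g x :=
  calc -phiConj f (-φ) - phiConj g φ = -phiConj f (-φ) + -phiConj g φ := sub_eq_add_neg _ _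
    _ ≤ (f x - (-φ) x) + (g x - φ x) :=
      add_le_add (neg_phiConj_le f _ x) (neg_phiConj_le g φ x)
    _ = f x + g x := by
      rw [sub_eq_add_neg, sub_eq_add_neg, add_add_add_comm, ← EReal.coe_neg, ← EReal.coe_neg,
        ← EReal.coe_add, Pi.neg_apply, neg_neg, add_neg_cancel, EReal.coe_zero, add_zero]

end PhiConj

theorem kkt_sufficient_general {X : Type*}
    (Φ : Set (X → ℝ))
    (f g : X → EReal)
    (hgconv : ∀ x : X, g x = phiBiconj Φ g x)
    (xstar : X) (φstar : X → ℝ) (hφstar : φstar ∈ Φ)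
    (hkkt1 : ∀ x : X, f x - f xstar ≥ ((-φstar) x : EReal) - ((-φstar) xstar : EReal))
    (hkkt2 : ∀ φ ∈ Φ, phiConj g φ - phiConj g φstar ≥ (φ xstar : EReal) - (φstar xstar : EReal)) :
    f xstar + g xstar = -(phiConj f (-φstar)) - phiConj g φstar ∧
    f xstar + g xstar = ⨅ x : X, f x + g x ∧
    (-(phiConj f (-φstar)) - phiConj g φstar : EReal) =
      ⨆ φ ∈ Φ, (-(phiConj f (-φ)) - phiConj g φ) := by
  have hsub_self (r : ℝ) : 0 = (r : EReal) - r := by rw [← EReal.coe_sub, sub_self, EReal.coe_zero]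
  obtain ⟨a, ha⟩ := EReal.exists_eq_coe_of_nonneg_sub_self ((hsub_self _).trans_le (hkkt1 xstar))
  obtain ⟨b, hb⟩ := EReal.exists_eq_coe_of_nonneg_sub_self
    ((hsub_self _).trans_le (hkkt2 φstar hφstar))
  have hfconj : phiConj f (-φstar) = ((-φstar) xstar - a : ℝ) := by
    rw [phiConj, ← iSup_univ]
    exact biSup_coe_sub_eq_of_forall_coe_sub_le_sub (Set.mem_univ _) ha fun x _ => hkkt1 x
  have hgx : g xstar = (φstar xstar - b : ℝ) := by
    rw [hgconv, phiBiconj]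
    exact biSup_coe_sub_eq_of_forall_coe_sub_le_sub hφstar hb hkkt2
  have hvalue : f xstar + g xstar = -phiConj f (-φstar) - phiConj g φstar := by
    rw [hfconj, ha, hgx, hb, Pi.neg_apply]
    norm_cast
    ring
  refine ⟨hvalue, le_antisymm (le_iInf fun x => ?_) (iInf_le _ xstar),
    le_antisymm (le_biSup (fun φ => -phiConj f (-φ) - phiConj g φ) hφstar)
      (iSup₂_le fun φ _ => ?_)⟩
  · exact hvalue ▸ neg_phiConj_neg_sub_phiConj_le f g φstar x
  · exact hvalue ▸ neg_phiConj_neg_sub_phiConj_le f g φ xstar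

/-- Sufficiency of the Φ-KKT conditions: if `−φ* ∈ ∂_Φ f(x*)` and
`x* ∈ ∂_X g*_Φ(φ*)`, then `x*` solves the primal problem and `φ*` solves the
symmetric conjugate dual, with equal optimal values. -/
theorem kkt_sufficient {X : Type*} [AddCommGroup X] [Module ℝ X]
    (Φ : Set (X → ℝ)) (hsym : ∀ φ ∈ Φ, -φ ∈ Φ)
    (f g : X → EReal)
    (hfconv : ∀ x : X, f x = phiBiconj Φ f x)
    (hgconv : ∀ x : X, g x = phiBiconj Φ g x)
    (xstar : X) (φstar : X → ℝ) (hφstar : φstar ∈ Φ)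
    (hkkt1 : ∀ x : X, f x - f xstar ≥ ((-φstar) x : EReal) - ((-φstar) xstar : EReal))
    (hkkt2 : ∀ φ ∈ Φ, phiConj g φ - phiConj g φstar ≥ (φ xstar : EReal) - (φstar xstar : EReal)) :
    f xstar + g xstar = -(phiConj f (-φstar)) - phiConj g φstar ∧
    f xstar + g xstar = ⨅ x : X, f x + g x ∧
    (-(phiConj f (-φstar)) - phiConj g φstar : EReal) =
      ⨆ φ ∈ Φ, (-(phiConj f (-φ)) - phiConj g φ) :=
  kkt_sufficient_general Φ f g hgconv xstar φstar hφstar hkkt1 hkkt2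
end

section
/- In the example f(x) = 2x², g(x) = −x² on ℝ with elementary functions Φ_lsc = {x ↦ −ax² + bx + c : a ≥ 0}, the infimal-convolution dual value sup_{b∈ℝ}(−f*(0,−b) − g*(0,b)) equals −∞, while the Φ_lsc-conjugate dual value sup_{(a,b), a≥0}(−(f − a‖·‖²)*(0,−b) − g*(a,b)) equals 0 = inf_{x∈ℝ}(f(x)+g(x)); hence there is zero duality gap for the conjugate dual but not for the infimal-convolution dual. -/
/-- `f(x) = 2x²`. -/
noncomputable def fEx (x : ℝ) : ℝ := 2 * x ^ 2

/-- `g(x) = −x²`. -/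
noncomputable def gEx (x : ℝ) : ℝ := -x ^ 2

/-- Conjugate `h*(a,b) := sup_x (−ax² + bx − h(x))`. -/
noncomputable def lscConj (h : ℝ → ℝ) (a b : ℝ) : EReal :=
  ⨆ x : ℝ, ((-a * x ^ 2 + b * x - h x : ℝ) : EReal)

/-!
Since `g = −x²` is not bounded below by any affine function, `g*(0, b) = +∞` for every `b`,
so every term of the infimal-convolution dual is `−∞`. Allowing the quadratic coefficient
`a = 1` repairs this: `g*(1, 0) = 0` and `(f − x²)*(0, 0) = 0`, so the conjugate dual attains
`0`; it cannot exceed `0` because `f − ax²` and `g` vanish at `0`, which makes both conjugates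
nonnegative.
-/

open Filter

lemma lscConj_eq_top_of_tendsto {h : ℝ → ℝ} {a b : ℝ}
    (hh : Tendsto (fun x => -a * x ^ 2 + b * x - h x) atTop atTop) : lscConj h a b = ⊤ := by
  refine iSup_eq_top.2 fun c hc => ?_
  induction c using EReal.rec with
  | bot => exact ⟨0, EReal.bot_lt_coe _⟩
  | top => exact absurd hc (lt_irrefl _)
  | coe r =>
    obtain ⟨x, hx⟩ := (hh.eventually_gt_atTop r).exists
    exact ⟨x, EReal.coe_lt_coe_iff.2 hx⟩

lemma lscConj_nonneg {h : ℝ → ℝ} (a b : ℝ) (h0 : h 0 ≤ 0) : 0 ≤ lscConj h a b :=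
  le_iSup_of_le 0 (by simpa using h0)

lemma lscConj_nonpos_iff {h : ℝ → ℝ} {a b : ℝ} :
    lscConj h a b ≤ 0 ↔ ∀ x, -a * x ^ 2 + b * x ≤ h x := by
  simp only [lscConj, iSup_le_iff, EReal.coe_nonpos, sub_nonpos]

lemma lscConj_gEx_eq_top {a : ℝ} (ha : a < 1) (b : ℝ) : lscConj gEx a b = ⊤ := by
  apply lscConj_eq_top_of_tendsto
  have hlin : Tendsto (fun x => (1 - a) * x + b) atTop atTop :=
    (tendsto_id.const_mul_atTop (sub_pos.2 ha)).atTop_add tendsto_const_nhds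
  refine (tendsto_id.atTop_mul_atTop₀ hlin).congr fun x => ?_
  simp only [gEx, id]
  ring

lemma lscConj_gEx_one_zero : lscConj gEx 1 0 = 0 :=
  le_antisymm (lscConj_nonpos_iff.2 fun x => by simp [gEx]) (lscConj_nonneg _ _ (by simp [gEx]))

lemma lscConj_fEx_sub_sq_zero : lscConj (fun x => fEx x - 1 * x ^ 2) 0 0 = 0 :=
  le_antisymm (lscConj_nonpos_iff.2 fun x => by simp only [fEx]; nlinarith [sq_nonneg x])
    (lscConj_nonneg _ _ (by simp [fEx]))

lemma neg_sub_nonpos_of_nonneg {x y : EReal} (hx : 0 ≤ x) (hy : 0 ≤ y) : -x - y ≤ 0 :=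
  EReal.sub_nonpos.2 ((EReal.neg_le_zero.2 hx).trans hy)

/-- In the example `f(x)=2x²`, `g(x)=−x²`: the infimal-convolution dual value
is `−∞`, while the Φ_lsc-conjugate dual value equals `0`, which is the primal
value `inf (f+g) = 0`; so zero duality gap holds for the conjugate dual but
fails for the infimal-convolution dual. -/
theorem example_zero_gap_CD_not_ICD :
    (⨆ b : ℝ, (-(lscConj fEx 0 (-b)) - lscConj gEx 0 b)) = ⊥ ∧
    (⨆ a ∈ {a : ℝ | 0 ≤ a}, ⨆ b : ℝ,
      (-(lscConj (fun x => fEx x - a * x ^ 2) 0 (-b)) - lscConj gEx a b)) = 0 ∧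
    (⨅ x : ℝ, ((fEx x + gEx x : ℝ) : EReal)) = 0 := by
  refine ⟨?_, ?_, ?_⟩
  · simp [lscConj_gEx_eq_top zero_lt_one]
  · refine le_antisymm (iSup₂_le fun a _ => iSup_le fun b => ?_) ?_
    · exact neg_sub_nonpos_of_nonneg (lscConj_nonneg _ _ (by simp [fEx]))
        (lscConj_nonneg _ _ (by simp [gEx]))
    · refine le_iSup₂_of_le (1 : ℝ) (by norm_num) (le_iSup_of_le 0 ?_)
      simp only [neg_zero, lscConj_fEx_sub_sq_zero, lscConj_gEx_one_zero, sub_zero, le_refl]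
  · refine le_antisymm (iInf_le_of_le 0 (by simp [fEx, gEx])) (le_iInf fun x => ?_)
    exact EReal.coe_nonneg.2 (by simp only [fEx, gEx]; nlinarith [sq_nonneg x])
end
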